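/- arXiv:2004.02154 — 9 statements merged into one kernel-verified Lean document; each statement's English description precedes it below -/
import Mathlib

section
/- Let B be an M×N real matrix with all entries in {-1,0,1}, and for each column v let deg(v) := Σ_h B(h,v)², assumed positive for all v. Let |h| denote the number of nonzero entries in row h of B. Then the largest eigenvalue λ_N of the normalized Laplacian, i.e. λ_N = max over nonzero f:V→ℝ of (Σ_h (Σ_v B(h,v) f(v))²) / (Σ_v deg(v) f(v)²), satisfies λ_N ≤ max_h |h|. -/
open Finset

/-- For an oriented hypergraph with incidence matrix `B` (entries in
{-1,0,1}) and all vertex degrees positive, the largest eigenvalue of the normalized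
Laplacian (the maximum of the Rayleigh quotient over nonzero `f`) is at most the
maximal hyperedge cardinality. -/
theorem sharp_upper_bound {M N : ℕ} (B : Matrix (Fin M) (Fin N) ℝ)
    (hB : ∀ h v, B h v = -1 ∨ B h v = 0 ∨ B h v = 1)
    (deg : Fin N → ℕ)
    (hdeg : ∀ v, deg v = (univ.filter fun h => B h v ≠ 0).card)
    (hdegpos : ∀ v, 0 < deg v)
    (card : Fin M → ℕ)
    (hcard : ∀ h, card h = (univ.filter fun v => B h v ≠ 0).card)
    (lam : ℝ)
    (hlam : IsGreatest {r : ℝ | ∃ f : Fin N → ℝ, f ≠ 0 ∧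
      r = (∑ h, (∑ v, B h v * f v) ^ 2) / (∑ v, (deg v : ℝ) * f v ^ 2)} lam) :
    lam ≤ (univ.sup card : ℕ) := by
  obtain ⟨f, hf, hr⟩ := hlam.1
  set K : ℕ := univ.sup card with hK
  -- squares of entries are indicators
  have hsq : ∀ h v, (B h v) ^ 2 = if B h v ≠ 0 then 1 else 0 := by
    intro h v
    rcases hB h v with h1 | h1 | h1 <;> simp [h1]
  -- denominator positive
  obtain ⟨v0, hv0⟩ : ∃ v, f v ≠ 0 := by
    by_contra hc
    push_neg at hc
    exact hf (funext hc)
  have hDpos : 0 < ∑ v, (deg v : ℝ) * f v ^ 2 := by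
    apply Finset.sum_pos' (fun v _ => by positivity)
    exact ⟨v0, mem_univ v0, by
      have := hdegpos v0
      have : (0:ℝ) < deg v0 := by exact_mod_cast this
      positivity⟩
  rw [hr, div_le_iff₀ hDpos]
  -- rowwise Cauchy-Schwarz
  have hrow : ∀ h : Fin M, (∑ v, B h v * f v) ^ 2 ≤ (K:ℝ) * ∑ v, (B h v)^2 * f v ^ 2 := by
    intro h
    have e1 : (∑ v, B h v * f v) = ∑ v ∈ univ.filter (fun v => B h v ≠ 0), B h v * f v := by
      rw [Finset.sum_filter]
      apply Finset.sum_congr rfl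
      intro v _
      by_cases hv : B h v = 0 <;> simp [hv]
    have e2 : ∑ v ∈ univ.filter (fun v => B h v ≠ 0), (B h v * f v) ^ 2
        ≤ ∑ v, (B h v)^2 * f v ^ 2 :=
      (Finset.sum_le_sum_of_subset_of_nonneg (Finset.filter_subset _ _)
        (fun v _ _ => by positivity)).trans_eq
        (Finset.sum_congr rfl (fun v _ => by ring))
    have hc2 : (((univ.filter (fun v => B h v ≠ 0)).card : ℕ) : ℝ) ≤ (K : ℝ) := by
      rw [← hcard h]; exact_mod_cast Finset.le_sup (mem_univ h)
    calc (∑ v, B h v * f v) ^ 2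
        = (∑ v ∈ univ.filter (fun v => B h v ≠ 0), B h v * f v) ^ 2 := by rw [e1]
      _ ≤ (univ.filter (fun v => B h v ≠ 0)).card * ∑ v ∈ univ.filter (fun v => B h v ≠ 0), (B h v * f v) ^ 2 :=
          sq_sum_le_card_mul_sum_sq
      _ ≤ (K:ℝ) * ∑ v, (B h v)^2 * f v ^ 2 := by
          apply mul_le_mul
          · exact hc2
          · exact e2
          · exact Finset.sum_nonneg fun v _ => by positivity
          · positivity
  calc (∑ h, (∑ v, B h v * f v) ^ 2)
      ≤ ∑ h, (K:ℝ) * ∑ v, (B h v)^2 * f v ^ 2 := Finset.sum_le_sum fun h _ => hrow h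
    _ = (K:ℝ) * ∑ v, (∑ h, (B h v)^2) * f v ^ 2 := by
        rw [← Finset.mul_sum, Finset.sum_comm]
        simp [Finset.sum_mul]
    _ = (K:ℝ) * ∑ v, (deg v : ℝ) * f v ^ 2 := by
        congr 1
        apply Finset.sum_congr rfl
        intro v _
        congr 1
        rw [hdeg v]
        simp [hsq, Finset.sum_ite, Finset.filter_filter]
end

section
/- Let B be the incidence matrix of an oriented hypergraph with all vertex degrees positive, and let N be the number of vertices. Then the largest normalized Laplacian eigenvalue satisfies λ_N ≤ N. -/
open Finset

/-- For an oriented hypergraph with all vertex degrees positive, the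
largest normalized Laplacian eigenvalue is at most the number `N` of vertices. -/
theorem lambda_le_N {M N : ℕ} (B : Matrix (Fin M) (Fin N) ℝ)
    (hB : ∀ h v, B h v = -1 ∨ B h v = 0 ∨ B h v = 1)
    (deg : Fin N → ℕ)
    (hdeg : ∀ v, deg v = (univ.filter fun h => B h v ≠ 0).card)
    (hdegpos : ∀ v, 0 < deg v)
    (lam : ℝ)
    (hlam : IsGreatest {r : ℝ | ∃ f : Fin N → ℝ, f ≠ 0 ∧
      r = (∑ h, (∑ v, B h v * f v) ^ 2) / (∑ v, (deg v : ℝ) * f v ^ 2)} lam) :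
    lam ≤ (N : ℝ) := by
  obtain ⟨⟨f, hf, rfl⟩, -⟩ := hlam
  -- pointwise facts about B
  have hsq : ∀ h v, B h v ^ 2 = if B h v ≠ 0 then (1 : ℝ) else 0 := by
    intro h v
    rcases hB h v with h1 | h1 | h1 <;> simp [h1]
  have hcube : ∀ h v, B h v ^ 3 = B h v := by
    intro h v
    rcases hB h v with h1 | h1 | h1 <;> norm_num [h1]
  -- column sums of B^2 equal degrees
  have hcol : ∀ v, ∑ h, B h v ^ 2 = (deg v : ℝ) := by
    intro v
    rw [hdeg v]
    simp only [hsq]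
    rw [Finset.sum_ite, Finset.sum_const, Finset.sum_const]
    simp
  -- denominator positive
  have hfv : ∃ v, f v ≠ 0 := by
    by_contra hc
    push_neg at hc
    exact hf (funext hc)
  obtain ⟨v0, hv0⟩ := hfv
  have hden : 0 < ∑ v, (deg v : ℝ) * f v ^ 2 := by
    apply Finset.sum_pos' (fun v _ => by positivity)
    exact ⟨v0, Finset.mem_univ v0, by
      have : (0:ℝ) < (deg v0 : ℝ) := by exact_mod_cast hdegpos v0
      positivity⟩
  rw [div_le_iff₀ hden]
  -- per-edge Cauchy-Schwarz bound
  have key : ∀ h, (∑ v, B h v * f v) ^ 2 ≤ (N : ℝ) * ∑ v, B h v ^ 2 * f v ^ 2 := by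
    intro h
    have heq : ∑ v, B h v * f v = ∑ v, B h v * (B h v ^ 2 * f v) := by
      apply Finset.sum_congr rfl
      intro v _
      rw [← mul_assoc, ← pow_succ']
      rw [hcube]
    rw [heq]
    calc (∑ v, B h v * (B h v ^ 2 * f v)) ^ 2
        ≤ (∑ v, B h v ^ 2) * (∑ v, (B h v ^ 2 * f v) ^ 2) :=
          Finset.sum_mul_sq_le_sq_mul_sq _ _ _
      _ ≤ (N : ℝ) * ∑ v, B h v ^ 2 * f v ^ 2 := by
          apply mul_le_mul
          · calc ∑ v, B h v ^ 2 ≤ ∑ _v : Fin N, (1:ℝ) := by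
                  apply Finset.sum_le_sum
                  intro v _
                  rw [hsq]; split <;> norm_num
              _ = (N : ℝ) := by simp
          · apply le_of_eq
            apply Finset.sum_congr rfl
            intro v _
            rcases hB h v with h1 | h1 | h1 <;> norm_num [h1]
          · positivity
          · positivity
  calc ∑ h, (∑ v, B h v * f v) ^ 2
      ≤ ∑ h, (N : ℝ) * ∑ v, B h v ^ 2 * f v ^ 2 := Finset.sum_le_sum fun h _ => key h
    _ = (N : ℝ) * ∑ v, (deg v : ℝ) * f v ^ 2 := by
        rw [← Finset.mul_sum, Finset.sum_comm]
        congr 1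
        apply Finset.sum_congr rfl
        intro v _
        rw [← Finset.sum_mul, hcol]
end

section
/- Suppose an oriented hypergraph (with all vertex degrees positive) is bipartite, i.e. there exist sign functions s:V→{±1} and ε:H→{±1} such that B(h,v) = ε(h)·s(v) whenever B(h,v) ≠ 0, and suppose |h| = c is constant over all hyperedges h. Then the largest normalized Laplacian eigenvalue equals c, i.e. λ_N = c. -/
open Finset

/-- If an oriented hypergraph (all vertex degrees positive) is bipartite,
i.e. `B h v = ε h * s v` whenever `B h v ≠ 0` for sign functions `s`, `ε`, and every
hyperedge has the same cardinality `c`, then the largest normalized Laplacian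
eigenvalue equals `c`. -/
theorem bipartite_constant_card_lambda_eq {M N : ℕ} (B : Matrix (Fin M) (Fin N) ℝ)
    (hB : ∀ h v, B h v = -1 ∨ B h v = 0 ∨ B h v = 1)
    (deg : Fin N → ℕ)
    (hdeg : ∀ v, deg v = (univ.filter fun h => B h v ≠ 0).card)
    (hdegpos : ∀ v, 0 < deg v)
    (card : Fin M → ℕ)
    (hcard : ∀ h, card h = (univ.filter fun v => B h v ≠ 0).card)
    (s : Fin N → ℝ) (ε : Fin M → ℝ)
    (hs : ∀ v, s v = 1 ∨ s v = -1) (hε : ∀ h, ε h = 1 ∨ ε h = -1)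
    (hbip : ∀ h v, B h v ≠ 0 → B h v = ε h * s v)
    (c : ℕ) (hconst : ∀ h, card h = c)
    (lam : ℝ)
    (hlam : IsGreatest {r : ℝ | ∃ f : Fin N → ℝ, f ≠ 0 ∧
      r = (∑ h, (∑ v, B h v * f v) ^ 2) / (∑ v, (deg v : ℝ) * f v ^ 2)} lam) :
    lam = (c : ℝ) := by
  -- handle N = 0
  rcases Nat.eq_zero_or_pos N with hN | hN
  · exfalso
    obtain ⟨f, hf, -⟩ := hlam.1
    exact hf (funext fun v => absurd (v.2.trans_le (le_of_eq hN)) (Nat.not_lt_zero _))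
  have v0 : Fin N := ⟨0, hN⟩
  -- basic facts about B squared
  have hBsq : ∀ h v, B h v ^ 2 = if B h v ≠ 0 then (1 : ℝ) else 0 := by
    intro h v
    rcases hB h v with h1 | h1 | h1 <;> simp [h1]
  have hdegR : ∀ v, (deg v : ℝ) = ∑ h, B h v ^ 2 := by
    intro v
    rw [hdeg v]
    rw [Finset.card_filter]
    push_cast
    exact Finset.sum_congr rfl fun h _ => (hBsq h v).symm
  have hcardR : ∀ h, ((card h : ℝ)) = ∑ v, B h v ^ 2 := by
    intro h
    rw [hcard h, Finset.card_filter]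
    push_cast
    exact Finset.sum_congr rfl fun v _ => (hBsq h v).symm
  -- M > 0 and c > 0
  obtain ⟨h0, hh0⟩ : ∃ h : Fin M, B h v0 ≠ 0 := by
    have := hdegpos v0
    rw [hdeg v0, Finset.card_pos] at this
    obtain ⟨h, hh⟩ := this
    exact ⟨h, (Finset.mem_filter.mp hh).2⟩
  have hc : 0 < c := by
    rw [← hconst h0, hcard h0, Finset.card_pos]
    exact ⟨v0, Finset.mem_filter.mpr ⟨Finset.mem_univ _, hh0⟩⟩
  -- upper bound: lam ≤ c
  have hub : lam ≤ (c : ℝ) := by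
    obtain ⟨f, hf, hr⟩ := hlam.1
    have hDpos : 0 < ∑ v, (deg v : ℝ) * f v ^ 2 := by
      obtain ⟨v, hv⟩ := Function.ne_iff.mp hf
      refine Finset.sum_pos' (fun v _ => mul_nonneg (Nat.cast_nonneg _) (sq_nonneg _))
        ⟨v, Finset.mem_univ _, ?_⟩
      have hv' : f v ≠ 0 := hv
      exact mul_pos (by exact_mod_cast hdegpos v) (pow_two_pos_of_ne_zero hv')
    rw [hr, div_le_iff₀ hDpos]
    have key : ∀ h : Fin M, (∑ v, B h v * f v) ^ 2 ≤ (c : ℝ) * ∑ v, B h v ^ 2 * f v ^ 2 := by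
      intro h
      have e1 : ∑ v, B h v * f v
          = ∑ v, (if B h v ≠ 0 then (1:ℝ) else 0) * (B h v * f v) := by
        refine Finset.sum_congr rfl fun v _ => ?_
        by_cases hv : B h v = 0 <;> simp [hv]
      have := sum_mul_sq_le_sq_mul_sq Finset.univ
        (fun v => if B h v ≠ 0 then (1:ℝ) else 0) (fun v => B h v * f v)
      rw [← e1] at this
      refine this.trans (le_of_eq ?_)
      congr 1
      · rw [show (∑ i, (if B h i ≠ 0 then (1:ℝ) else 0) ^ 2) = ∑ i, B h i ^ 2 from
          Finset.sum_congr rfl fun v _ => by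
            rw [hBsq]; by_cases hv : B h v = 0 <;> simp [hv],
          ← hcardR h, hconst h]
      · exact Finset.sum_congr rfl fun v _ => by ring
    calc ∑ h, (∑ v, B h v * f v) ^ 2
        ≤ ∑ h, (c : ℝ) * ∑ v, B h v ^ 2 * f v ^ 2 := Finset.sum_le_sum fun h _ => key h
      _ = (c : ℝ) * ∑ v, (deg v : ℝ) * f v ^ 2 := by
          rw [← Finset.mul_sum, Finset.sum_comm]
          congr 1
          refine Finset.sum_congr rfl fun v _ => ?_
          rw [hdegR v, Finset.sum_mul]
  -- lower bound: c ≤ lam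
  have hlb : (c : ℝ) ≤ lam := by
    apply hlam.2
    refine ⟨s, ?_, ?_⟩
    · intro hs0
      have := congrFun hs0 v0
      rcases hs v0 with h1 | h1 <;> rw [h1] at this <;> norm_num at this
    · have hnum : ∀ h : Fin M, ∑ v, B h v * s v = ε h * (c : ℝ) := by
        intro h
        have : ∑ v, B h v * s v = ∑ v, ε h * B h v ^ 2 := by
          refine Finset.sum_congr rfl fun v _ => ?_
          by_cases hv : B h v = 0
          · simp [hv]
          · rw [hbip h v hv]
            rcases hs v with h1 | h1 <;> rcases hε h with h2 | h2 <;>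
              rw [h1, h2] <;> ring
        rw [this, ← Finset.mul_sum, ← hcardR h, hconst h]
      have hden : ∑ v, (deg v : ℝ) * (s v) ^ 2 = (M : ℝ) * c := by
        have : ∀ v, (deg v : ℝ) * (s v) ^ 2 = ∑ h, B h v ^ 2 := by
          intro v
          rcases hs v with h1 | h1 <;> rw [h1, hdegR v] <;> ring
        rw [Finset.sum_congr rfl fun v _ => this v, Finset.sum_comm]
        rw [Finset.sum_congr rfl fun h _ => (hcardR h).symm]
        rw [Finset.sum_congr rfl fun h (_ : h ∈ univ) => congrArg (Nat.cast) (hconst h)]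
        simp [Finset.sum_const, mul_comm]
      have hMpos : (0:ℝ) < M := by
        have : (0:ℕ) < M := Fin.pos h0
        exact_mod_cast this
      have hsq : ∀ h : Fin M, (∑ v, B h v * s v) ^ 2 = (c:ℝ) ^ 2 := by
        intro h
        rw [hnum h]
        rcases hε h with h2 | h2 <;> rw [h2] <;> ring
      rw [hden, Finset.sum_congr rfl fun h _ => hsq h, Finset.sum_const, Finset.card_univ,
        Fintype.card_fin, nsmul_eq_mul]
      rw [eq_div_iff (ne_of_gt (mul_pos hMpos (by exact_mod_cast hc)))]
      ring
  linarith
end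

section
/- Let Γ be an oriented hypergraph with incidence matrix B and all vertex degrees positive, and let Γ̂ be a bipartite sub-hypergraph of Γ with vertex set V̂ ⊆ V and hyperedge set Ĥ ⊆ H (with incidences restricted to V̂), with Ĥ nonempty. Let deg_Γ̂(v) be the degree of v in Γ̂. Then λ_N ≥ η(Γ̂) := (Σ_{v∈V̂} deg_Γ̂(v)²/deg(v)) / |Ĥ|. -/
open Finset

/-- Lower bound for the largest normalized Laplacian eigenvalue via
bipartite sub-hypergraphs: `λ_N ≥ η(Γ̂) = (∑_{v∈V̂} deg_Γ̂(v)²/deg v)/|Ĥ|`. -/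
theorem lower_bound_eta {M N : ℕ} (B : Matrix (Fin M) (Fin N) ℝ)
    (hB : ∀ h v, B h v = -1 ∨ B h v = 0 ∨ B h v = 1)
    (deg : Fin N → ℕ)
    (hdeg : ∀ v, deg v = (univ.filter fun h => B h v ≠ 0).card)
    (hdegpos : ∀ v, 0 < deg v)
    (Vhat : Finset (Fin N)) (Hhat : Finset (Fin M)) (hHhat : Hhat.Nonempty)
    -- Γ̂ is bipartite:
    (s : Fin N → ℝ) (ε : Fin M → ℝ)
    (hs : ∀ v ∈ Vhat, s v = 1 ∨ s v = -1) (hε : ∀ h ∈ Hhat, ε h = 1 ∨ ε h = -1)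
    (hbip : ∀ h ∈ Hhat, ∀ v ∈ Vhat, B h v ≠ 0 → B h v = ε h * s v)
    (degHat : Fin N → ℕ)
    (hdegHat : ∀ v, degHat v = (Hhat.filter fun h => B h v ≠ 0).card)
    (lam : ℝ)
    (hlam : IsGreatest {r : ℝ | ∃ γ : Fin M → ℝ, γ ≠ 0 ∧
      r = (∑ v, (1 / (deg v : ℝ)) * (∑ h, B h v * γ h) ^ 2) / (∑ h, γ h ^ 2)} lam) :
    (∑ v ∈ Vhat, (degHat v : ℝ) ^ 2 / (deg v : ℝ)) / (Hhat.card : ℝ) ≤ lam := by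
  set γ : Fin M → ℝ := fun h => if h ∈ Hhat then ε h else 0 with hγ
  obtain ⟨h0, hh0⟩ := hHhat
  have hεne : ∀ h ∈ Hhat, ε h ≠ 0 := by
    intro h hh
    rcases hε h hh with h1 | h1 <;> rw [h1] <;> norm_num
  have hγne : γ ≠ 0 := by
    intro hc
    have := congrFun hc h0
    simp only [hγ, if_pos hh0, Pi.zero_apply] at this
    exact hεne h0 hh0 this
  have hden : (∑ h, γ h ^ 2) = (Hhat.card : ℝ) := by
    rw [← Finset.sum_filter_add_sum_filter_not univ (· ∈ Hhat)]
    have h1 : ∀ h ∈ univ.filter (· ∈ Hhat), γ h ^ 2 = 1 := by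
      intro h hh
      simp only [mem_filter] at hh
      simp only [hγ, if_pos hh.2]
      rcases hε h hh.2 with h1 | h1 <;> rw [h1] <;> norm_num
    have h2 : ∀ h ∈ univ.filter (¬ · ∈ Hhat), γ h ^ 2 = 0 := by
      intro h hh
      simp only [mem_filter] at hh
      simp [hγ, if_neg hh.2]
    rw [Finset.sum_congr rfl h1, Finset.sum_congr rfl h2]
    simp [Finset.filter_mem_eq_inter]
  -- key: for v ∈ Vhat, inner sum = s v * degHat v
  have hkey : ∀ v ∈ Vhat, (∑ h, B h v * γ h) = s v * (degHat v : ℝ) := by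
    intro v hv
    have : (∑ h, B h v * γ h) = ∑ h ∈ Hhat, B h v * ε h := by
      rw [← Finset.sum_filter_add_sum_filter_not univ (· ∈ Hhat)]
      have h2 : ∀ h ∈ univ.filter (¬ · ∈ Hhat), B h v * γ h = 0 := by
        intro h hh
        simp only [mem_filter] at hh
        simp [hγ, if_neg hh.2]
      rw [Finset.sum_congr rfl h2, Finset.sum_const_zero, add_zero]
      rw [Finset.filter_mem_eq_inter, univ_inter]
      exact Finset.sum_congr rfl fun h hh => by simp [hγ, if_pos hh]
    rw [this]
    have : (∑ h ∈ Hhat, B h v * ε h) = ∑ h ∈ Hhat, (if B h v ≠ 0 then s v else 0) := by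
      refine Finset.sum_congr rfl fun h hh => ?_
      by_cases hbv : B h v = 0
      · simp [hbv]
      · rw [if_pos hbv, hbip h hh v hv hbv]
        rcases hε h hh with h1 | h1 <;> rw [h1] <;> ring
    rw [this, Finset.sum_ite, Finset.sum_const_zero, add_zero, Finset.sum_const, hdegHat]
    simp [mul_comm]
  have hnum : (∑ v ∈ Vhat, (degHat v : ℝ) ^ 2 / (deg v : ℝ)) ≤
      (∑ v, (1 / (deg v : ℝ)) * (∑ h, B h v * γ h) ^ 2) := by
    have heq : ∀ v ∈ Vhat, (degHat v : ℝ) ^ 2 / (deg v : ℝ) =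
        (1 / (deg v : ℝ)) * (∑ h, B h v * γ h) ^ 2 := by
      intro v hv
      rw [hkey v hv, mul_pow]
      have : s v ^ 2 = 1 := by rcases hs v hv with h1 | h1 <;> rw [h1] <;> norm_num
      rw [this, one_mul]
      ring
    rw [Finset.sum_congr rfl heq]
    refine Finset.sum_le_sum_of_subset_of_nonneg (Finset.subset_univ _) ?_
    intro v _ _
    have : (0:ℝ) ≤ 1 / (deg v : ℝ) := by positivity
    positivity
  have hcard : (0:ℝ) < (Hhat.card : ℝ) := by
    have : 0 < Hhat.card := Finset.card_pos.mpr ⟨h0, hh0⟩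
    exact_mod_cast this
  have hmem : (∑ v, (1 / (deg v : ℝ)) * (∑ h, B h v * γ h) ^ 2) / (∑ h, γ h ^ 2) ≤ lam :=
    hlam.2 ⟨γ, hγne, rfl⟩
  refine le_trans ?_ hmem
  rw [hden]
  gcongr
end

section
/- For a connected graph Γ on N ≥ 2 vertices, viewed as an oriented hypergraph where every edge has one input and one output, the lower bound λ_N ≥ η(Γ̂) applied to the star Γ̂ of edges incident to any fixed vertex v yields λ_N ≥ 1 + Σ_{w∼v} 1/(deg(w)·deg(v)) ≥ N/(N-1). In particular, λ_N ≥ N/(N-1). -/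
/-!
Evaluate the Rayleigh quotient at the test function that is `1` at `v`, `-1 / deg w` at each
neighbour `w` of `v` and `0` elsewhere. With `S = ∑_{w∼v} 1 / deg w`, its denominator is
`deg v + S`, while the edges at `v` alone contribute `∑_{w∼v} (1 + 1 / deg w)²` to its numerator;
by Cauchy–Schwarz this is at least `(deg v + S)² / deg v`. Hence
`λ_N ≥ (deg v + S) / deg v = η(Γ̂)`, and `deg w ≤ N - 1` gives `S ≥ deg v / (N - 1)`.
-/

open Finset

theorem Finset.sum_row_add_sum_col_le_sum_sum {ι M : Type*} [Fintype ι] [AddCommMonoid M]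
    [PartialOrder M] [IsOrderedAddMonoid M] {F : ι → ι → M} (hF : ∀ a b, 0 ≤ F a b) (i : ι)
    (hii : F i i = 0) : ∑ b, F i b + ∑ a, F a i ≤ ∑ a, ∑ b, F a b := by
  classical
  have hcol : ∑ a ∈ univ.erase i, F a i = ∑ a, F a i := sum_erase _ hii
  calc ∑ b, F i b + ∑ a, F a i
      = ∑ b, F i b + ∑ a ∈ univ.erase i, F a i := by rw [hcol]
    _ ≤ ∑ b, F i b + ∑ a ∈ univ.erase i, ∑ b, F a b := by
      gcongr with a
      exact single_le_sum (fun b _ ↦ hF a b) (mem_univ i)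
    _ = ∑ a, ∑ b, F a b := by rw [add_comm, sum_erase_add _ _ (mem_univ i)]

namespace SimpleGraph

variable {V : Type*} [Fintype V] (G : SimpleGraph V) [DecidableRel G.Adj]

noncomputable def dirichletEnergy (f : V → ℝ) : ℝ :=
  (∑ a, ∑ b, if G.Adj a b then (f a - f b) ^ 2 else 0) / 2

noncomputable def degreeWeightedNormSq (f : V → ℝ) : ℝ :=
  ∑ a, (G.degree a : ℝ) * f a ^ 2

noncomputable def rayleighQuotient (f : V → ℝ) : ℝ :=
  G.dirichletEnergy f / G.degreeWeightedNormSq f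

/-- `η(Γ̂)` for the star `Γ̂` of edges at `v`: in `∑ u, deg_Γ̂ u ^ 2 / deg u` the centre contributes
`deg v` and each neighbour `w` contributes `1 / deg w`. -/
noncomputable def starEta (v : V) : ℝ :=
  ((G.degree v : ℝ) + ∑ w ∈ G.neighborFinset v, (G.degree w : ℝ)⁻¹) / G.degree v

theorem sum_neighborFinset_sq_le_dirichletEnergy (f : V → ℝ) (v : V) :
    ∑ w ∈ G.neighborFinset v, (f v - f w) ^ 2 ≤ G.dirichletEnergy f := by
  set F : V → V → ℝ := fun a b ↦ if G.Adj a b then (f a - f b) ^ 2 else 0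
  have hrow : ∑ b, F v b = ∑ w ∈ G.neighborFinset v, (f v - f w) ^ 2 := by
    simp only [F, ← sum_filter, neighborFinset_eq_filter]
  have hcol : ∑ a, F a v = ∑ b, F v b :=
    sum_congr rfl fun a _ ↦ by simp only [F, G.adj_comm a v, sub_sq_comm (f a)]
  have := sum_row_add_sum_col_le_sum_sum (F := F) (fun a b ↦ by positivity) v (by simp [F])
  unfold dirichletEnergy
  linarith

noncomputable def starTestFunction [DecidableEq V] (v : V) : V → ℝ := fun u ↦
  if u = v then 1 else if G.Adj v u then -(G.degree u : ℝ)⁻¹ else 0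

variable {G} {v : V}

theorem card_div_card_sub_one_le_starEta (hv : 0 < G.degree v) :
    (Fintype.card V : ℝ) / (Fintype.card V - 1) ≤ G.starEta v := by
  set n : ℝ := (Fintype.card V : ℝ)
  set d : ℝ := (G.degree v : ℝ)
  have hd : 0 < d := by positivity
  have hdeg (w : V) : (G.degree w : ℝ) ≤ n - 1 := by
    have : (G.degree w : ℝ) + 1 ≤ Fintype.card V := by exact_mod_cast G.degree_lt_card_verts w
    linarith
  have hn : 0 < n - 1 := hd.trans_le (hdeg v)
  have hS : d / (n - 1) ≤ ∑ w ∈ G.neighborFinset v, (G.degree w : ℝ)⁻¹ :=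
    calc d / (n - 1) = ∑ w ∈ G.neighborFinset v, (n - 1)⁻¹ := by
          rw [sum_const, card_neighborFinset_eq_degree, nsmul_eq_mul, div_eq_mul_inv]
      _ ≤ _ := sum_le_sum fun w hw ↦
          inv_anti₀ (by positivity [((G.mem_neighborFinset v w).1 hw).degree_pos_right]) (hdeg w)
  calc n / (n - 1) = (d + d / (n - 1)) / d := by field_simp; ring
    _ ≤ G.starEta v := by rw [starEta]; gcongr

theorem starEta_eq_one_add_sum (hv : 0 < G.degree v) :
    G.starEta v = 1 + ∑ w ∈ G.neighborFinset v, 1 / ((G.degree w : ℝ) * G.degree v) := by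
  have hd : (G.degree v : ℝ) ≠ 0 := by positivity
  rw [starEta, add_div, div_self hd, sum_div]
  simp only [mul_inv, div_eq_mul_inv, one_mul]

section

variable [DecidableEq V]

theorem starTestFunction_self : G.starTestFunction v v = 1 := if_pos rfl

theorem starTestFunction_of_adj {w : V} (h : G.Adj v w) :
    G.starTestFunction v w = -(G.degree w : ℝ)⁻¹ := by
  simp [starTestFunction, h.ne', h]

theorem starTestFunction_ne_zero : G.starTestFunction v ≠ 0 :=
  fun h ↦ one_ne_zero (starTestFunction_self.symm.trans (congrFun h v))

theorem degreeWeightedNormSq_starTestFunction :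
    G.degreeWeightedNormSq (G.starTestFunction v) =
      G.degree v + ∑ w ∈ G.neighborFinset v, (G.degree w : ℝ)⁻¹ := by
  have hterm : ∀ a ∈ univ.erase v, (G.degree a : ℝ) * G.starTestFunction v a ^ 2 =
      if G.Adj v a then (G.degree a : ℝ)⁻¹ else 0 := by
    intro a ha
    by_cases h : G.Adj v a
    · have : (G.degree a : ℝ) ≠ 0 := by positivity [h.degree_pos_right]
      rw [starTestFunction_of_adj h, if_pos h]
      field_simp
    · simp [starTestFunction, ne_of_mem_erase ha, h]
  rw [degreeWeightedNormSq, ← add_sum_erase _ _ (mem_univ v), starTestFunction_self, one_pow,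
    mul_one, sum_congr rfl hterm, sum_erase _ (by simp), ← sum_filter, ← neighborFinset_eq_filter]

theorem starEta_le_rayleighQuotient (hv : 0 < G.degree v) :
    G.starEta v ≤ G.rayleighQuotient (G.starTestFunction v) := by
  set d : ℝ := (G.degree v : ℝ)
  set S := ∑ w ∈ G.neighborFinset v, (G.degree w : ℝ)⁻¹
  have hd : 0 < d := by positivity
  have hS : 0 ≤ S := sum_nonneg fun w _ ↦ by positivity
  have hcs : (d + S) ^ 2 ≤ d * ∑ w ∈ G.neighborFinset v, (1 + (G.degree w : ℝ)⁻¹) ^ 2 := by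
    have := sq_sum_le_card_mul_sum_sq (s := G.neighborFinset v)
      (f := fun w ↦ 1 + (G.degree w : ℝ)⁻¹)
    rwa [sum_add_distrib, sum_const, nsmul_one, card_neighborFinset_eq_degree] at this
  have henergy : ∑ w ∈ G.neighborFinset v, (1 + (G.degree w : ℝ)⁻¹) ^ 2 ≤
      G.dirichletEnergy (G.starTestFunction v) := by
    refine le_of_eq_of_le (sum_congr rfl fun w hw ↦ ?_)
      (G.sum_neighborFinset_sq_le_dirichletEnergy _ v)
    rw [starTestFunction_self, starTestFunction_of_adj ((G.mem_neighborFinset v w).1 hw),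
      sub_neg_eq_add]
  rw [starEta, rayleighQuotient, degreeWeightedNormSq_starTestFunction,
    div_le_div_iff₀ hd (add_pos_of_pos_of_nonneg hd hS), ← sq]
  calc (d + S) ^ 2 ≤ d * ∑ w ∈ G.neighborFinset v, (1 + (G.degree w : ℝ)⁻¹) ^ 2 := hcs
    _ ≤ G.dirichletEnergy (G.starTestFunction v) * d := by
        rw [mul_comm]; gcongr

end

end SimpleGraph

/-- For a connected graph on `N ≥ 2` vertices, applying the lower bound
`λ_N ≥ η(Γ̂)` to the star of edges at a vertex `v` gives
`λ_N ≥ 1 + ∑_{w∼v} 1/(deg w · deg v) ≥ N/(N-1)`; in particular `λ_N ≥ N/(N-1)`. -/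
theorem graph_lower_bound {N : ℕ} (hN : 2 ≤ N) (G : SimpleGraph (Fin N))
    [DecidableRel G.Adj] (hconn : G.Connected) (v : Fin N)
    (lam : ℝ)
    (hlam : IsGreatest {r : ℝ | ∃ f : Fin N → ℝ, f ≠ 0 ∧
      r = ((∑ a, ∑ b, if G.Adj a b then (f a - f b) ^ 2 else 0) / 2) /
          (∑ a, (G.degree a : ℝ) * f a ^ 2)} lam) :
    (1 + ∑ w ∈ G.neighborFinset v, 1 / ((G.degree w : ℝ) * (G.degree v : ℝ)) ≤ lam) ∧
    ((N : ℝ) / (N - 1) ≤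
      1 + ∑ w ∈ G.neighborFinset v, 1 / ((G.degree w : ℝ) * (G.degree v : ℝ))) ∧
    (N : ℝ) / (N - 1) ≤ lam := by
  have : Nontrivial (Fin N) := Fin.nontrivial_iff_two_le.mpr hN
  have hv : 0 < G.degree v := hconn.preconnected.degree_pos_of_nontrivial v
  rw [← SimpleGraph.starEta_eq_one_add_sum hv]
  have hrayleigh : G.starEta v ≤ lam :=
    (SimpleGraph.starEta_le_rayleighQuotient hv).trans
      (hlam.2 ⟨_, SimpleGraph.starTestFunction_ne_zero, rfl⟩)
  have hcard : (N : ℝ) / (N - 1) ≤ G.starEta v := by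
    simpa using SimpleGraph.card_div_card_sub_one_le_starEta hv
  exact ⟨hrayleigh, hcard, hcard.trans hrayleigh⟩
end

section
/- Let Γ be an oriented hypergraph with incidence matrix B and all vertex degrees positive. Define Q := max_{h∈H} Σ_{v : B(h,v)≠0} 1/deg(v). Then Q ≤ λ_N, the largest eigenvalue of the normalized Laplacian. -/
open Finset

/-- The Cheeger-like constant `Q = max_h ∑_{v∈h} 1/deg v` is a lower
bound for the largest normalized Laplacian eigenvalue of an oriented hypergraph. -/
theorem Q_le_lambda {M N : ℕ} (hM : 0 < M) (B : Matrix (Fin M) (Fin N) ℝ)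
    (hB : ∀ h v, B h v = -1 ∨ B h v = 0 ∨ B h v = 1)
    (deg : Fin N → ℕ)
    (hdeg : ∀ v, deg v = (univ.filter fun h => B h v ≠ 0).card)
    (hdegpos : ∀ v, 0 < deg v)
    (Q : ℝ)
    (hQ : IsGreatest {q : ℝ | ∃ h : Fin M,
      q = ∑ v ∈ univ.filter fun v => B h v ≠ 0, 1 / (deg v : ℝ)} Q)
    (lam : ℝ)
    (hlam : IsGreatest {r : ℝ | ∃ γ : Fin M → ℝ, γ ≠ 0 ∧
      r = (∑ v, (1 / (deg v : ℝ)) * (∑ h, B h v * γ h) ^ 2) / (∑ h, γ h ^ 2)} lam) :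
    Q ≤ lam := by
  obtain ⟨⟨h₀, hQeq⟩, -⟩ := hQ
  apply hlam.2
  refine ⟨fun h => if h = h₀ then 1 else 0, ?_, ?_⟩
  · intro hcon
    have := congrFun hcon h₀
    simp at this
  · have hden : (∑ h : Fin M, (if h = h₀ then (1:ℝ) else 0) ^ 2) = 1 := by
      simp [ite_pow]
    rw [hden, div_one, hQeq]
    have hnum : ∀ v, (∑ h : Fin M, B h v * (if h = h₀ then (1:ℝ) else 0)) = B h₀ v := by
      intro v
      simp [mul_ite]
    rw [show (∑ v, (1 / (deg v : ℝ)) * (∑ h, B h v * (if h = h₀ then (1:ℝ) else 0)) ^ 2)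
        = ∑ v, (1 / (deg v : ℝ)) * (B h₀ v) ^ 2 by
      exact Finset.sum_congr rfl fun v _ => by rw [hnum v]]
    rw [Finset.sum_filter]
    refine Finset.sum_congr rfl fun v _ => ?_
    rcases hB h₀ v with h | h | h <;> simp [h]
end

section
/- Let Γ be an oriented hypergraph with incidence matrix B, nonempty hyperedge set H, and all vertex degrees positive. Then Q := max_{h∈H} Σ_{v : B(h,v)≠0} 1/deg(v) equals the maximum over nonzero γ:H→ℝ of the L¹-Rayleigh quotient (Σ_v (1/deg(v))·|Σ_h B(h,v)γ(h)|)/(Σ_h |γ(h)|). -/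
open Finset

lemma abs_B_aux {x : ℝ} (hx : x = -1 ∨ x = 0 ∨ x = 1) :
    |x| = if x ≠ 0 then 1 else 0 := by
  rcases hx with h | h | h <;> simp [h]

/-- The Cheeger-like constant `Q = max_h ∑_{v∈h} 1/deg v` equals the
maximum over nonzero `γ : H → ℝ` of the L¹-Rayleigh quotient
`(∑_v (1/deg v)·|∑_h B h v · γ h|)/(∑_h |γ h|)`. -/
theorem Q_characterization {M N : ℕ} (hM : 0 < M) (B : Matrix (Fin M) (Fin N) ℝ)
    (hB : ∀ h v, B h v = -1 ∨ B h v = 0 ∨ B h v = 1)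
    (deg : Fin N → ℕ)
    (hdeg : ∀ v, deg v = (univ.filter fun h => B h v ≠ 0).card)
    (hdegpos : ∀ v, 0 < deg v)
    (Q : ℝ)
    (hQ : IsGreatest {q : ℝ | ∃ h : Fin M,
      q = ∑ v ∈ univ.filter fun v => B h v ≠ 0, 1 / (deg v : ℝ)} Q) :
    IsGreatest {r : ℝ | ∃ γ : Fin M → ℝ, γ ≠ 0 ∧
      r = (∑ v, (1 / (deg v : ℝ)) * |∑ h, B h v * γ h|) / (∑ h, |γ h|)} Q := by
  obtain ⟨⟨h0, hQ0⟩, hub⟩ := hQ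
  have hdegnn : ∀ v : Fin N, 0 ≤ 1 / (deg v : ℝ) := fun v => by positivity
  constructor
  · refine ⟨fun h => if h = h0 then 1 else 0, ?_, ?_⟩
    · intro hγ
      have := congrFun hγ h0
      simp at this
    · have hsum : ∀ v, (∑ h, B h v * if h = h0 then (1:ℝ) else 0) = B h0 v := by
        intro v
        rw [Finset.sum_eq_single h0]
        · simp
        · intro b _ hb; simp [hb]
        · simp
      have hden : (∑ h, |if h = h0 then (1:ℝ) else 0|) = 1 := by
        rw [Finset.sum_eq_single h0]
        · simp
        · intro b _ hb; simp [hb]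
        · simp
      rw [hden, div_one, hQ0]
      rw [Finset.sum_filter]
      apply Finset.sum_congr rfl
      intro v _
      rw [hsum v, abs_B_aux (hB h0 v)]
      split <;> simp
  · rintro r ⟨γ, hγ, rfl⟩
    have hden : 0 < ∑ h, |γ h| := by
      obtain ⟨h1, hh1⟩ : ∃ h, γ h ≠ 0 := by
        by_contra hc
        push_neg at hc
        exact hγ (funext hc)
      apply Finset.sum_pos' (fun h _ => abs_nonneg _)
      exact ⟨h1, mem_univ _, abs_pos.mpr hh1⟩
    rw [div_le_iff₀ hden]
    calc ∑ v, (1 / (deg v : ℝ)) * |∑ h, B h v * γ h|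
        ≤ ∑ v, (1 / (deg v : ℝ)) * ∑ h, |B h v| * |γ h| := by
          apply Finset.sum_le_sum
          intro v _
          apply mul_le_mul_of_nonneg_left _ (hdegnn v)
          calc |∑ h, B h v * γ h| ≤ ∑ h, |B h v * γ h| :=
                Finset.abs_sum_le_sum_abs _ _
            _ = ∑ h, |B h v| * |γ h| := by simp [abs_mul]
      _ = ∑ h, |γ h| * ∑ v, (1 / (deg v : ℝ)) * |B h v| := by
          simp_rw [Finset.mul_sum]
          rw [Finset.sum_comm]
          apply Finset.sum_congr rfl
          intro h _
          apply Finset.sum_congr rfl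
          intro v _
          ring
      _ ≤ ∑ h, |γ h| * Q := by
          apply Finset.sum_le_sum
          intro h _
          apply mul_le_mul_of_nonneg_left _ (abs_nonneg _)
          have : (∑ v, (1 / (deg v : ℝ)) * |B h v|) =
              ∑ v ∈ univ.filter fun v => B h v ≠ 0, 1 / (deg v : ℝ) := by
            rw [Finset.sum_filter]
            apply Finset.sum_congr rfl
            intro v _
            rw [abs_B_aux (hB h v)]
            split <;> simp
          rw [this]
          exact hub ⟨h, rfl⟩
      _ = Q * ∑ h, |γ h| := by rw [← Finset.sum_mul]; ring
end

section
/- Let Γ = K_N minus one edge (v₁,v₂), with N ≥ 3, and let Γ̂ be the bipartite subgraph consisting of all edges incident to v₁ or v₂. Then η(Γ̂) = (N+1)/(N−1). Combined with the known fact λ_N(K_N \ e) = (N+1)/(N−1), the lower bound λ_N ≥ η(Γ̂) is attained with equality. -/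
open Finset

/-- For `K_N` minus the edge `(v₁,v₂)` (`N ≥ 3`) and the bipartite
subgraph `S` of all edges incident to `v₁` or `v₂`, one has `η(S) = (N+1)/(N-1)`,
and since `λ_N(K_N \ e) = (N+1)/(N-1)`, the lower bound `λ_N ≥ η(S)` is attained
with equality. -/
theorem complete_minus_edge_eta {N : ℕ} (hN : 3 ≤ N) (v1 v2 : Fin N) (hv : v1 ≠ v2)
    (G : SimpleGraph (Fin N)) [DecidableRel G.Adj]
    (hG : ∀ a b, G.Adj a b ↔ a ≠ b ∧ ¬((a = v1 ∧ b = v2) ∨ (a = v2 ∧ b = v1)))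
    (S : SimpleGraph (Fin N)) [DecidableRel S.Adj]
    (hSdef : ∀ a b, S.Adj a b ↔ G.Adj a b ∧ (a = v1 ∨ a = v2 ∨ b = v1 ∨ b = v2))
    (eta lam : ℝ)
    (heta : eta = (∑ u, (S.degree u : ℝ) ^ 2 / (G.degree u : ℝ)) / (S.edgeFinset.card : ℝ))
    (hlam : IsGreatest {r : ℝ | ∃ f : Fin N → ℝ, f ≠ 0 ∧
      r = ((∑ a, ∑ b, if G.Adj a b then (f a - f b) ^ 2 else 0) / 2) /
          (∑ a, (G.degree a : ℝ) * f a ^ 2)} lam) :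
    eta = ((N : ℝ) + 1) / (N - 1) ∧ lam = eta := by
  have hv' : v2 ≠ v1 := hv.symm
  have hNR : (3 : ℝ) ≤ (N : ℝ) := by exact_mod_cast hN
  have hn2pos : (0 : ℝ) < (N : ℝ) - 2 := by linarith
  have hn1pos : (0 : ℝ) < (N : ℝ) - 1 := by linarith
  -- the "rest" vertices
  set R : Finset (Fin N) := univ \ {v1, v2} with hRdef
  have hcardR : R.card = N - 2 := by
    rw [hRdef, card_sdiff_of_subset (subset_univ _), card_pair hv, card_univ, Fintype.card_fin]
  have hcardR' : (R.card : ℝ) = (N : ℝ) - 2 := by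
    rw [hcardR, Nat.cast_sub (by omega : 2 ≤ N)]; norm_num
  have hmemR : ∀ a : Fin N, a ∈ R ↔ ¬(a = v1 ∨ a = v2) := by
    intro a; rw [hRdef]; simp [not_or]
  -- splitting sums
  have hsplit : ∀ g : Fin N → ℝ, (∑ a, g a) = g v1 + g v2 + ∑ a ∈ R, g a := by
    intro g
    rw [← Finset.sum_sdiff (subset_univ ({v1, v2} : Finset (Fin N))),
      Finset.sum_pair hv, ← hRdef]
    ring
  -- degrees of G
  have hdegG : ∀ a : Fin N, G.degree a = if a = v1 ∨ a = v2 then N - 2 else N - 1 := by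
    intro a
    rw [SimpleGraph.degree]
    by_cases h1 : a = v1
    · subst h1
      have hNB : G.neighborFinset a = univ \ {a, v2} := by
        ext b
        simp only [SimpleGraph.mem_neighborFinset, hG, mem_sdiff, mem_univ, true_and,
          mem_insert, mem_singleton, not_or]
        constructor
        · rintro ⟨hab, hp⟩
          exact ⟨fun h => hab h.symm, hp.1⟩
        · rintro ⟨hb1, hb2⟩
          exact ⟨fun h => hb1 h.symm, hb2, fun h => hv h.1⟩
      rw [hNB, card_sdiff_of_subset (subset_univ _), card_pair hv, card_univ, Fintype.card_fin]
      simp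
    · by_cases h2 : a = v2
      · subst h2
        have hNB : G.neighborFinset a = univ \ {v1, a} := by
          ext b
          simp only [SimpleGraph.mem_neighborFinset, hG, mem_sdiff, mem_univ, true_and,
            mem_insert, mem_singleton, not_or]
          constructor
          · rintro ⟨hab, hp⟩
            exact ⟨hp.2, fun h => hab h.symm⟩
          · rintro ⟨hb1, hb2⟩
            exact ⟨fun h => hb2 h.symm, fun h => hv' h.1, hb1⟩
        rw [hNB, card_sdiff_of_subset (subset_univ _), card_pair hv, card_univ, Fintype.card_fin]
        simp [h1]
      · have hNB : G.neighborFinset a = univ \ {a} := by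
          ext b
          simp only [SimpleGraph.mem_neighborFinset, hG, mem_sdiff, mem_univ, true_and,
            mem_singleton, not_or]
          constructor
          · rintro ⟨hab, -⟩
            exact fun h => hab h.symm
          · intro hb
            exact ⟨fun h => hb h.symm, fun h => h1 h.1, fun h => h2 h.1⟩
        rw [hNB, card_sdiff_of_subset (subset_univ _), card_singleton, card_univ, Fintype.card_fin]
        simp [h1, h2]
  -- degrees of S
  have hdegS : ∀ a : Fin N, S.degree a = if a = v1 ∨ a = v2 then N - 2 else 2 := by
    intro a
    by_cases h1 : a = v1 ∨ a = v2
    · have hNB : S.neighborFinset a = G.neighborFinset a := by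
        ext b
        simp only [SimpleGraph.mem_neighborFinset, hSdef]
        rcases h1 with h | h <;> subst h <;> tauto
      rw [SimpleGraph.degree, hNB, ← SimpleGraph.degree, hdegG a, if_pos h1, if_pos h1]
    · push_neg at h1
      have hNB : S.neighborFinset a = {v1, v2} := by
        ext b
        simp only [SimpleGraph.mem_neighborFinset, hSdef, hG, mem_insert, mem_singleton]
        constructor
        · rintro ⟨-, (h | h | h | h)⟩
          · exact absurd h h1.1
          · exact absurd h h1.2
          · exact Or.inl h
          · exact Or.inr h
        · rintro (h | h) <;> subst h
          · refine ⟨⟨h1.1, fun hp => ?_⟩, Or.inr (Or.inr (Or.inl rfl))⟩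
            rcases hp with ⟨h, -⟩ | ⟨h, -⟩
            exacts [h1.1 h, h1.2 h]
          · refine ⟨⟨h1.2, fun hp => ?_⟩, Or.inr (Or.inr (Or.inr rfl))⟩
            rcases hp with ⟨h, -⟩ | ⟨h, -⟩
            exacts [h1.1 h, h1.2 h]
      rw [SimpleGraph.degree, hNB, card_pair hv, if_neg (by tauto)]
  -- real-valued degree facts
  have hdegGR : ∀ a : Fin N, (G.degree a : ℝ)
      = if a = v1 ∨ a = v2 then (N : ℝ) - 2 else (N : ℝ) - 1 := by
    intro a
    rw [hdegG a]
    by_cases h : a = v1 ∨ a = v2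
    · rw [if_pos h, if_pos h, Nat.cast_sub (by omega : 2 ≤ N)]; norm_num
    · rw [if_neg h, if_neg h, Nat.cast_sub (by omega : 1 ≤ N)]; norm_num
  have hdegSR : ∀ a : Fin N, (S.degree a : ℝ)
      = if a = v1 ∨ a = v2 then (N : ℝ) - 2 else 2 := by
    intro a
    rw [hdegS a]
    by_cases h : a = v1 ∨ a = v2
    · rw [if_pos h, if_pos h, Nat.cast_sub (by omega : 2 ≤ N)]; norm_num
    · rw [if_neg h, if_neg h]; norm_num
  -- edge count of S
  have hScard : (S.edgeFinset.card : ℝ) = 2 * ((N : ℝ) - 2) := by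
    have h2 : ∑ v, S.degree v = 2 * S.edgeFinset.card :=
      SimpleGraph.sum_degrees_eq_twice_card_edges S
    have h3 : (∑ v, (S.degree v : ℝ)) = 2 * (S.edgeFinset.card : ℝ) := by
      exact_mod_cast congrArg (Nat.cast : ℕ → ℝ) h2
    rw [hsplit (fun v => (S.degree v : ℝ))] at h3
    have h4 : ∀ a ∈ R, (S.degree a : ℝ) = 2 := by
      intro a ha
      rw [hdegSR a, if_neg ((hmemR a).mp ha)]
    rw [Finset.sum_congr rfl h4, Finset.sum_const, nsmul_eq_mul, hcardR',
      hdegSR v1, hdegSR v2, if_pos (Or.inl rfl), if_pos (Or.inr rfl)] at h3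
    linarith
  -- value of eta
  have hetaval : eta = ((N : ℝ) + 1) / ((N : ℝ) - 1) := by
    rw [heta, hsplit (fun u => (S.degree u : ℝ) ^ 2 / (G.degree u : ℝ))]
    have h4 : ∀ a ∈ R, (S.degree a : ℝ) ^ 2 / (G.degree a : ℝ) = 4 / ((N : ℝ) - 1) := by
      intro a ha
      rw [hdegSR a, hdegGR a, if_neg ((hmemR a).mp ha), if_neg ((hmemR a).mp ha)]
      norm_num
    rw [Finset.sum_congr rfl h4, Finset.sum_const, nsmul_eq_mul, hcardR',
      hdegSR v1, hdegSR v2, hdegGR v1, hdegGR v2, if_pos (Or.inl rfl),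
      if_pos (Or.inr rfl), if_pos (Or.inl rfl), if_pos (Or.inr rfl), hScard]
    field_simp
    ring
  refine ⟨hetaval, ?_⟩
  -- key quadratic-form identities
  have hQ : ∀ f : Fin N → ℝ, (∑ a, ∑ b, if G.Adj a b then (f a - f b) ^ 2 else 0)
      = 2 * (N : ℝ) * (∑ a, f a ^ 2) - 2 * (∑ a, f a) ^ 2 - 2 * (f v1 - f v2) ^ 2 := by
    intro f
    have hpt : ∀ a b : Fin N, (if G.Adj a b then (f a - f b) ^ 2 else 0)
        = (f a - f b) ^ 2
          - (if (a = v1 ∧ b = v2) ∨ (a = v2 ∧ b = v1) then (f a - f b) ^ 2 else 0) := by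
      intro a b
      by_cases hab : G.Adj a b
      · rw [if_pos hab, if_neg ((hG a b).mp hab).2]; ring
      · rw [if_neg hab]
        by_cases hp : (a = v1 ∧ b = v2) ∨ (a = v2 ∧ b = v1)
        · rw [if_pos hp]; ring
        · have hab2 : a = b := by
            by_contra h
            exact hab ((hG a b).mpr ⟨h, hp⟩)
          rw [if_neg hp, hab2]; ring
    simp only [hpt, Finset.sum_sub_distrib]
    have e1 : ∑ a : Fin N, ∑ b : Fin N, (f a - f b) ^ 2
        = 2 * (N : ℝ) * (∑ a, f a ^ 2) - 2 * (∑ a, f a) ^ 2 := by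
      have h1 : ∀ a : Fin N, ∑ b : Fin N, (f a - f b) ^ 2
          = (N : ℝ) * f a ^ 2 - 2 * f a * (∑ b, f b) + ∑ b, f b ^ 2 := by
        intro a
        have h2 : ∀ b : Fin N, (f a - f b) ^ 2 = f a ^ 2 - 2 * f a * f b + f b ^ 2 := by
          intro b; ring
        rw [Finset.sum_congr rfl fun b _ => h2 b, Finset.sum_add_distrib,
          Finset.sum_sub_distrib, Finset.sum_const, ← Finset.mul_sum, card_univ,
          Fintype.card_fin, nsmul_eq_mul]
      rw [Finset.sum_congr rfl fun a _ => h1 a, Finset.sum_add_distrib,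
        Finset.sum_sub_distrib, Finset.sum_const, card_univ, Fintype.card_fin, nsmul_eq_mul]
      simp only [← Finset.mul_sum, ← Finset.sum_mul]
      ring
    have e2 : ∑ a : Fin N, ∑ b : Fin N,
        (if (a = v1 ∧ b = v2) ∨ (a = v2 ∧ b = v1) then (f a - f b) ^ 2 else 0)
        = 2 * (f v1 - f v2) ^ 2 := by
      have inner : ∀ a : Fin N, ∑ b : Fin N,
          (if (a = v1 ∧ b = v2) ∨ (a = v2 ∧ b = v1) then (f a - f b) ^ 2 else 0)
          = (if a = v1 then (f v1 - f v2) ^ 2 else 0)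
            + (if a = v2 then (f v2 - f v1) ^ 2 else 0) := by
        intro a
        by_cases h1 : a = v1
        · subst h1
          simp [hv, Finset.sum_ite_eq']
        · by_cases h2 : a = v2
          · subst h2
            simp [h1, Finset.sum_ite_eq']
          · simp [h1, h2]
      rw [Finset.sum_congr rfl fun a _ => inner a, Finset.sum_add_distrib]
      simp only [Finset.sum_ite_eq', mem_univ, if_pos]
      ring
    rw [e1, e2]
  -- denominator identity
  have hDen : ∀ f : Fin N → ℝ, (∑ a, (G.degree a : ℝ) * f a ^ 2)
      = ((N : ℝ) - 1) * (∑ a, f a ^ 2) - f v1 ^ 2 - f v2 ^ 2 := by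
    intro f
    have hpt : ∀ a : Fin N, (G.degree a : ℝ) * f a ^ 2
        = ((N : ℝ) - 1) * f a ^ 2 - (if a = v1 then f a ^ 2 else 0)
          - (if a = v2 then f a ^ 2 else 0) := by
      intro a
      rw [hdegGR a]
      by_cases h1 : a = v1
      · subst h1
        rw [if_pos (Or.inl rfl), if_pos rfl, if_neg hv]; ring
      · by_cases h2 : a = v2
        · subst h2
          rw [if_pos (Or.inr rfl), if_neg h1, if_pos rfl]; ring
        · rw [if_neg (by tauto), if_neg h1, if_neg h2]; ring
    rw [Finset.sum_congr rfl fun a _ => hpt a, Finset.sum_sub_distrib,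
      Finset.sum_sub_distrib, ← Finset.mul_sum]
    simp only [Finset.sum_ite_eq', mem_univ, if_pos]
  -- positivity of denominators
  have hdenpos : ∀ f : Fin N → ℝ, f ≠ 0 → 0 < ∑ a, (G.degree a : ℝ) * f a ^ 2 := by
    intro f hf
    obtain ⟨a0, ha0⟩ := Function.ne_iff.mp hf
    have hdpos : ∀ a : Fin N, (0 : ℝ) < (G.degree a : ℝ) := by
      intro a
      rw [hdegGR a]
      by_cases h : a = v1 ∨ a = v2
      · rw [if_pos h]; linarith
      · rw [if_neg h]; linarith
    have ha0' : f a0 ≠ 0 := by simpa using ha0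
    refine Finset.sum_pos' (fun a _ => ?_) ⟨a0, mem_univ a0, ?_⟩
    · exact mul_nonneg (hdpos a).le (sq_nonneg _)
    · exact mul_pos (hdpos a0) ((sq_nonneg (f a0)).lt_of_ne' (pow_ne_zero 2 ha0'))
  -- the Rayleigh quotient is at most (N+1)/(N-1)
  have hbound : ∀ f : Fin N → ℝ, f ≠ 0 →
      ((∑ a, ∑ b, if G.Adj a b then (f a - f b) ^ 2 else 0) / 2) /
        (∑ a, (G.degree a : ℝ) * f a ^ 2) ≤ ((N : ℝ) + 1) / ((N : ℝ) - 1) := by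
    intro f hf
    have hden := hdenpos f hf
    rw [div_le_div_iff₀ hden hn1pos, hQ f, hDen f]
    have hP : (∑ a, f a ^ 2) = f v1 ^ 2 + f v2 ^ 2 + ∑ a ∈ R, f a ^ 2 :=
      hsplit (fun a => f a ^ 2)
    have hT : (∑ a, f a) = f v1 + f v2 + ∑ a ∈ R, f a := hsplit f
    set x := f v1
    set y := f v2
    set q := ∑ a ∈ R, f a ^ 2 with hq
    set s := ∑ a ∈ R, f a with hs
    have hq0 : 0 ≤ q := Finset.sum_nonneg fun a _ => sq_nonneg _
    have hcs : s ^ 2 ≤ ((N : ℝ) - 2) * q := by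
      have := sq_sum_le_card_mul_sum_sq (s := R) (f := f)
      rw [hcardR'] at this
      exact this
    rw [hP, hT]
    have hkey : 0 ≤ ((N : ℝ) - 2) *
        (((N : ℝ) + 1) * (((N : ℝ) - 1) * (x ^ 2 + y ^ 2 + q) - x ^ 2 - y ^ 2)
          - ((N : ℝ) - 1) * ((N : ℝ) * (x ^ 2 + y ^ 2 + q) - (x + y + s) ^ 2
            - (x - y) ^ 2)) := by
      have c1 : 0 ≤ ((N : ℝ) - 1) * (((N : ℝ) - 2) * q - s ^ 2) :=
        mul_nonneg hn1pos.le (by linarith)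
      have c2 : 0 ≤ (((N : ℝ) - 1) * s + ((N : ℝ) - 2) * (x + y)) ^ 2 := sq_nonneg _
      have c3 : 0 ≤ ((N : ℝ) - 2) ^ 2 * (x - y) ^ 2 := mul_nonneg (sq_nonneg _) (sq_nonneg _)
      have hid : ((N : ℝ) - 2) *
          (((N : ℝ) + 1) * (((N : ℝ) - 1) * (x ^ 2 + y ^ 2 + q) - x ^ 2 - y ^ 2)
            - ((N : ℝ) - 1) * ((N : ℝ) * (x ^ 2 + y ^ 2 + q) - (x + y + s) ^ 2
              - (x - y) ^ 2))
          = ((N : ℝ) - 1) * (((N : ℝ) - 2) * q - s ^ 2)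
            + (((N : ℝ) - 1) * s + ((N : ℝ) - 2) * (x + y)) ^ 2
            + ((N : ℝ) - 2) ^ 2 * (x - y) ^ 2 := by ring
      rw [hid]
      linarith
    have hfinal : 0 ≤ ((N : ℝ) + 1) * (((N : ℝ) - 1) * (x ^ 2 + y ^ 2 + q) - x ^ 2 - y ^ 2)
        - ((N : ℝ) - 1) * ((N : ℝ) * (x ^ 2 + y ^ 2 + q) - (x + y + s) ^ 2
          - (x - y) ^ 2) := by
      by_contra h
      push_neg at h
      nlinarith [mul_pos hn2pos (neg_pos.mpr h)]
    linarith [hfinal]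
  -- lam ≤ eta
  have hle : lam ≤ eta := by
    obtain ⟨f, hf, hr⟩ := hlam.1
    rw [hetaval, hr]
    exact hbound f hf
  -- the optimal vector
  have hge : eta ≤ lam := by
    apply hlam.2
    refine ⟨fun a => if a = v1 ∨ a = v2 then (N : ℝ) - 1 else -2, ?_, ?_⟩
    · intro h
      have := congrFun h v1
      rw [if_pos (Or.inl rfl)] at this
      simp only [Pi.zero_apply] at this
      linarith
    · set f0 : Fin N → ℝ := fun a => if a = v1 ∨ a = v2 then (N : ℝ) - 1 else -2 with hf0
      have hx : f0 v1 = (N : ℝ) - 1 := by rw [hf0]; simp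
      have hy : f0 v2 = (N : ℝ) - 1 := by rw [hf0]; simp
      have hP0 : (∑ a, f0 a ^ 2) = 2 * ((N : ℝ) - 1) ^ 2 + 4 * ((N : ℝ) - 2) := by
        rw [hsplit (fun a => f0 a ^ 2), hx, hy]
        have h4 : ∀ a ∈ R, f0 a ^ 2 = 4 := by
          intro a ha
          rw [hf0]
          simp only
          rw [if_neg ((hmemR a).mp ha)]
          norm_num
        rw [Finset.sum_congr rfl h4, Finset.sum_const, nsmul_eq_mul, hcardR']
        ring
      have hT0 : (∑ a, f0 a) = 2 := by
        rw [hsplit f0, hx, hy]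
        have h4 : ∀ a ∈ R, f0 a = -2 := by
          intro a ha
          rw [hf0]
          simp only
          rw [if_neg ((hmemR a).mp ha)]
        rw [Finset.sum_congr rfl h4, Finset.sum_const, nsmul_eq_mul, hcardR']
        ring
      rw [hetaval, hQ f0, hDen f0, hP0, hT0, hx, hy]
      rw [div_eq_div_iff hn1pos.ne' (by nlinarith : (0:ℝ) < (↑N - 1) * (2 * ((N:ℝ) - 1) ^ 2 + 4 * ((N:ℝ) - 2)) - ((N:ℝ) - 1) ^ 2 - ((N:ℝ) - 1) ^ 2).ne']
      ring
  rw [hetaval]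
  linarith [hle, hge]
end

section
/- Let B be the incidence matrix of a connected oriented hypergraph with all vertex degrees positive, and let f be an eigenfunction achieving λ_N. If λ_N = max_h |h|, then |f| is constant on V. -/
/-!
Cauchy–Schwarz on a hyperedge `h` gives `(∑ v, B h v f v)² ≤ |h| ∑_{v ∈ h} f v² ≤ (max |h|) ∑_{v ∈ h} f v²`,
and summing over `h` (each vertex `v` lies in `deg v` hyperedges) bounds the Rayleigh numerator by
`(max |h|) ∑ v, deg v f v²`. If the bound is attained, every Cauchy–Schwarz step is an equality, so
`B h v f v` is constant on each hyperedge; since `|B h v| = 1` there, `|f|` is constant on hyperedges,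
and connectivity spreads this over all of `V`.
-/

open Finset

theorem Finset.sum_sum_sub_sq {ι R : Type*} [CommRing R] (s : Finset ι) (x : ι → R) :
    ∑ i ∈ s, ∑ j ∈ s, (x i - x j) ^ 2 = 2 * (#s * ∑ i ∈ s, x i ^ 2 - (∑ i ∈ s, x i) ^ 2) := by
  simp only [sub_sq, sum_add_distrib, sum_sub_distrib, sum_const, nsmul_eq_mul, ← mul_sum,
    ← sum_mul, sq (∑ i ∈ s, x i)]
  ring

theorem Finset.sq_sum_eq_card_mul_sum_sq_iff {ι : Type*} {s : Finset ι} {x : ι → ℝ} :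
    (∑ i ∈ s, x i) ^ 2 = #s * ∑ i ∈ s, x i ^ 2 ↔ ∀ i ∈ s, ∀ j ∈ s, x i = x j := by
  have hnonneg : ∀ i ∈ s, 0 ≤ ∑ j ∈ s, (x i - x j) ^ 2 :=
    fun i _ => sum_nonneg fun j _ => sq_nonneg _
  rw [eq_comm, ← sub_eq_zero, ← mul_eq_zero_iff_left two_ne_zero, ← sum_sum_sub_sq,
    sum_eq_zero_iff_of_nonneg hnonneg]
  refine forall₂_congr fun i _ => ?_
  rw [sum_eq_zero_iff_of_nonneg fun j _ => sq_nonneg _]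
  simp only [sq_eq_zero_iff, sub_eq_zero]

theorem List.IsChain.eq_of_head?_of_getLast? {α β : Type*} {r : α → α → Prop} {g : α → β}
    (hr : ∀ a b, r a b → g a = g b) {l : List α} (hl : l.IsChain r) {a b : α}
    (ha : l.head? = some a) (hb : l.getLast? = some b) : g a = g b := by
  have hne : l ≠ [] := by rintro rfl; simp at ha
  obtain rfl : l.head hne = a := by simpa [List.head?_eq_some_head hne] using ha
  obtain rfl : l.getLast hne = b := by simpa [List.getLast?_eq_some_getLast hne] using hb
  have := (List.relationReflTransGen_of_exists_isChain l hl hne).lift g hr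
  rwa [Relation.reflTransGen_eq_self] at this

/-- Also covers `b = 0`, where `a / b = 0` by convention. -/
theorem eq_mul_of_div_eq_of_le {K : Type*} [Field K] [LinearOrder K] [IsStrictOrderedRing K]
    {a b c : K} (ha : 0 ≤ a) (hab : a ≤ c * b) (h : a / b = c) :
    a = c * b := by
  rcases eq_or_ne b 0 with rfl | hb
  · simpa using le_antisymm (by simpa using hab) ha
  · rwa [div_eq_iff hb] at h

namespace OrientedHypergraph

variable {H V : Type*} {B : Matrix H V ℝ}

section

variable [Fintype V]

noncomputable def hyperedge (B : Matrix H V ℝ) (h : H) : Finset V := univ.filter fun v => B h v ≠ 0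

theorem mem_hyperedge {h : H} {v : V} : v ∈ hyperedge B h ↔ B h v ≠ 0 := by
  simp [hyperedge]

theorem sum_mul_eq_sum_hyperedge (f : V → ℝ) (h : H) :
    ∑ v, B h v * f v = ∑ v ∈ hyperedge B h, B h v * f v :=
  (sum_filter_of_ne fun _ _ hv => left_ne_zero_of_mul hv).symm

theorem abs_eq_one_of_mem_hyperedge (hB : ∀ h v, B h v = -1 ∨ B h v = 0 ∨ B h v = 1) {h : H}
    {v : V} (hv : v ∈ hyperedge B h) : |B h v| = 1 := by
  rw [mem_hyperedge] at hv
  rcases hB h v with h1 | h1 | h1 <;> simp_all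

theorem sum_sq_mul_eq_sum_sq (hB : ∀ h v, B h v = -1 ∨ B h v = 0 ∨ B h v = 1) (f : V → ℝ)
    (h : H) : ∑ v ∈ hyperedge B h, (B h v * f v) ^ 2 = ∑ v ∈ hyperedge B h, f v ^ 2 :=
  sum_congr rfl fun v hv => by
    rw [mul_pow, ← sq_abs (B h v), abs_eq_one_of_mem_hyperedge hB hv, one_pow, one_mul]

theorem sq_sum_mul_le (hB : ∀ h v, B h v = -1 ∨ B h v = 0 ∨ B h v = 1) (f : V → ℝ) (h : H) :
    (∑ v, B h v * f v) ^ 2 ≤ #(hyperedge B h) * ∑ v ∈ hyperedge B h, f v ^ 2 := by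
  rw [sum_mul_eq_sum_hyperedge, ← sum_sq_mul_eq_sum_sq hB]
  exact sq_sum_le_card_mul_sum_sq

theorem abs_eq_of_sq_sum_mul_eq (hB : ∀ h v, B h v = -1 ∨ B h v = 0 ∨ B h v = 1)
    {f : V → ℝ} {h : H}
    (heq : (∑ v, B h v * f v) ^ 2 = #(hyperedge B h) * ∑ v ∈ hyperedge B h, f v ^ 2) :
    ∀ v ∈ hyperedge B h, ∀ w ∈ hyperedge B h, |f v| = |f w| := by
  rw [sum_mul_eq_sum_hyperedge, ← sum_sq_mul_eq_sum_sq hB, sq_sum_eq_card_mul_sum_sq_iff] at heq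
  intro v hv w hw
  have habs := congrArg abs (heq v hv w hw)
  rwa [abs_mul, abs_mul, abs_eq_one_of_mem_hyperedge hB hv, abs_eq_one_of_mem_hyperedge hB hw,
    one_mul, one_mul] at habs

end

variable [Fintype H] [Fintype V]

noncomputable def degree (B : Matrix H V ℝ) (v : V) : ℕ := #(univ.filter fun h => B h v ≠ 0)

noncomputable def maxCard (B : Matrix H V ℝ) : ℕ := univ.sup fun h => #(hyperedge B h)

theorem sum_sum_hyperedge_eq_sum_degree_mul (f : V → ℝ) :
    ∑ h, ∑ v ∈ hyperedge B h, f v = ∑ v, (degree B v : ℝ) * f v := by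
  simp only [hyperedge, degree, sum_filter]
  rw [sum_comm]
  refine sum_congr rfl fun v _ => ?_
  rw [← sum_filter, sum_const, nsmul_eq_mul]

theorem card_hyperedge_mul_le_maxCard_mul (f : V → ℝ) (h : H) :
    #(hyperedge B h) * ∑ v ∈ hyperedge B h, f v ^ 2 ≤ maxCard B * ∑ v ∈ hyperedge B h, f v ^ 2 :=
  mul_le_mul_of_nonneg_right (mod_cast le_sup (f := fun h => #(hyperedge B h)) (mem_univ h))
    (sum_nonneg fun _ _ => sq_nonneg _)

theorem sq_sum_mul_le_maxCard_mul (hB : ∀ h v, B h v = -1 ∨ B h v = 0 ∨ B h v = 1)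
    (f : V → ℝ) (h : H) :
    (∑ v, B h v * f v) ^ 2 ≤ maxCard B * ∑ v ∈ hyperedge B h, f v ^ 2 :=
  (sq_sum_mul_le hB f h).trans (card_hyperedge_mul_le_maxCard_mul f h)

theorem sum_sq_sum_mul_le (hB : ∀ h v, B h v = -1 ∨ B h v = 0 ∨ B h v = 1) (f : V → ℝ) :
    ∑ h, (∑ v, B h v * f v) ^ 2 ≤ maxCard B * ∑ v, (degree B v : ℝ) * f v ^ 2 := by
  rw [← sum_sum_hyperedge_eq_sum_degree_mul, mul_sum]
  exact sum_le_sum fun h _ => sq_sum_mul_le_maxCard_mul hB f h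

theorem abs_eq_of_sum_sq_sum_mul_eq (hB : ∀ h v, B h v = -1 ∨ B h v = 0 ∨ B h v = 1)
    {f : V → ℝ} (heq : ∑ h, (∑ v, B h v * f v) ^ 2 = maxCard B * ∑ v, (degree B v : ℝ) * f v ^ 2)
    (h : H) : ∀ v ∈ hyperedge B h, ∀ w ∈ hyperedge B h, |f v| = |f w| := by
  rw [← sum_sum_hyperedge_eq_sum_degree_mul, mul_sum,
    sum_eq_sum_iff_of_le fun h _ => sq_sum_mul_le_maxCard_mul hB f h] at heq
  exact abs_eq_of_sq_sum_mul_eq hB <| le_antisymm (sq_sum_mul_le hB f h)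
    ((card_hyperedge_mul_le_maxCard_mul f h).trans_eq (heq h (mem_univ h)).symm)

end OrientedHypergraph

open OrientedHypergraph

theorem rigidity_abs_constant_general {M N : ℕ} (B : Matrix (Fin M) (Fin N) ℝ)
    (hB : ∀ h v, B h v = -1 ∨ B h v = 0 ∨ B h v = 1)
    (deg : Fin N → ℕ)
    (hdeg : ∀ v, deg v = (univ.filter fun h => B h v ≠ 0).card)
    (card : Fin M → ℕ)
    (hcard : ∀ h, card h = (univ.filter fun v => B h v ≠ 0).card)
    (hconn : ∀ v w : Fin N, ∃ l : List (Fin N),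
      l.head? = some v ∧ l.getLast? = some w ∧
      l.Chain' (fun a b => ∃ h, B h a ≠ 0 ∧ B h b ≠ 0))
    (lam : ℝ)
    (f : Fin N → ℝ)
    (hfeig : (∑ h, (∑ v, B h v * f v) ^ 2) / (∑ v, (deg v : ℝ) * f v ^ 2) = lam)
    (heq : lam = (univ.sup card : ℕ)) :
    ∃ c : ℝ, ∀ v, |f v| = c := by
  obtain rfl : deg = degree B := funext hdeg
  obtain rfl : card = fun h => #(hyperedge B h) := funext hcard
  have hsum : ∑ h, (∑ v, B h v * f v) ^ 2 = maxCard B * ∑ v, (degree B v : ℝ) * f v ^ 2 :=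
    eq_mul_of_div_eq_of_le (sum_nonneg fun _ _ => sq_nonneg _) (sum_sq_sum_mul_le hB f)
      (hfeig.trans heq)
  have hadj (v w : Fin N) : (∃ h, B h v ≠ 0 ∧ B h w ≠ 0) → |f v| = |f w| := fun ⟨h, hv, hw⟩ =>
    abs_eq_of_sum_sq_sum_mul_eq hB hsum h v (mem_hyperedge.2 hv) w (mem_hyperedge.2 hw)
  rcases isEmpty_or_nonempty (Fin N) with _ | ⟨⟨v₀⟩⟩
  · exact ⟨0, isEmptyElim⟩
  · refine ⟨|f v₀|, fun v => ?_⟩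
    obtain ⟨l, hv₀, hv, hl⟩ := hconn v₀ v
    exact (List.IsChain.eq_of_head?_of_getLast? hadj hl hv₀ hv).symm

/-- For a connected oriented hypergraph with positive degrees, if `f`
is an eigenfunction achieving the largest normalized Laplacian eigenvalue `λ_N` and
`λ_N = max_h |h|`, then `|f|` is constant on `V`. -/
theorem rigidity_abs_constant {M N : ℕ} (B : Matrix (Fin M) (Fin N) ℝ)
    (hB : ∀ h v, B h v = -1 ∨ B h v = 0 ∨ B h v = 1)
    (deg : Fin N → ℕ)
    (hdeg : ∀ v, deg v = (univ.filter fun h => B h v ≠ 0).card)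
    (hdegpos : ∀ v, 0 < deg v)
    (card : Fin M → ℕ)
    (hcard : ∀ h, card h = (univ.filter fun v => B h v ≠ 0).card)
    (hconn : ∀ v w : Fin N, ∃ l : List (Fin N),
      l.head? = some v ∧ l.getLast? = some w ∧
      l.Chain' (fun a b => ∃ h, B h a ≠ 0 ∧ B h b ≠ 0))
    (lam : ℝ)
    (hlam : IsGreatest {r : ℝ | ∃ f : Fin N → ℝ, f ≠ 0 ∧
      r = (∑ h, (∑ v, B h v * f v) ^ 2) / (∑ v, (deg v : ℝ) * f v ^ 2)} lam)
    (f : Fin N → ℝ) (hf : f ≠ 0)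
    (hfeig : (∑ h, (∑ v, B h v * f v) ^ 2) / (∑ v, (deg v : ℝ) * f v ^ 2) = lam)
    (heq : lam = (univ.sup card : ℕ)) :
    ∃ c : ℝ, ∀ v, |f v| = c :=
  rigidity_abs_constant_general B hB deg hdeg card hcard hconn lam f hfeig heq
end
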